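/- arXiv:2205.07072 — 2 statements merged into one kernel-verified Lean document; each statement's English description precedes it below -/
import Mathlib

section
/- Let P be a poset and X a coherent cutset of P. Then the subposet Γ_f(P,X) of the crosscut poset consisting of connected components of st(A) for finite non-empty A ⊆ X equals {st(A) | A is a finite non-empty astral subset of X}. Moreover, for each C ∈ Γ_f(P,X) there exists z ∈ C with C = st_C(z) (the star of z within C); in particular each element of Γ_f(P,X) is a contractible subspace of P. -/
/-- The star of an element: all elements comparable to `a`. -/
def starOf {α : Type*} [PartialOrder α] (a : α) : Set α := {x | x ≤ a ∨ a ≤ x}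

/-- The star of a subset: elements comparable to every element of `A`. -/
def starSetOf {α : Type*} [PartialOrder α] (A : Set α) : Set α := ⋂ a ∈ A, starOf a

/-- A subset is astral if it is contained in the star of some element. -/
def IsAstral {α : Type*} [PartialOrder α] (A : Set α) : Prop := ∃ x : α, A ⊆ starOf x

/-- One step of the comparability relation inside a subposet `S`. -/
def CompStep {α : Type*} [PartialOrder α] (S : Set α) (x y : α) : Prop :=
  x ∈ S ∧ y ∈ S ∧ (x ≤ y ∨ y ≤ x)

/-- `x` and `y` are connected inside the subposet `S`. -/
def ConnIn {α : Type*} [PartialOrder α] (S : Set α) (x y : α) : Prop :=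
  Relation.ReflTransGen (CompStep S) x y

/-- A subposet is connected (as a subposet, via comparability). -/
def IsConnSub {α : Type*} [PartialOrder α] (S : Set α) : Prop :=
  S.Nonempty ∧ ∀ x ∈ S, ∀ y ∈ S, ConnIn S x y

/-- The connected component of `x` in the subposet `S`. -/
def compOf {α : Type*} [PartialOrder α] (S : Set α) (x : α) : Set α :=
  {y | y ∈ S ∧ ConnIn S x y}

/-- `C` is a connected component of the subposet `S`. -/
def IsCompOf {α : Type*} [PartialOrder α] (S C : Set α) : Prop :=
  ∃ x ∈ S, C = compOf S x

/-- The crosscut poset `Γ(P,X)`: connected components of the nonempty `st(A)`, `∅ ≠ A ⊆ X`. -/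
def crosscutPoset {α : Type*} [PartialOrder α] (X : Set α) : Set (Set α) :=
  {C | ∃ A : Set α, A.Nonempty ∧ A ⊆ X ∧ IsCompOf (starSetOf A) C}

/-- The subposet `Γ_f(P,X)` coming from finite subsets `A ⊆ X`. -/
def crosscutPosetF {α : Type*} [PartialOrder α] (X : Set α) : Set (Set α) :=
  {C | ∃ A : Set α, A.Nonempty ∧ A.Finite ∧ A ⊆ X ∧ IsCompOf (starSetOf A) C}

/-- `X` is a cutset: every finite chain extends to a chain by an element of `X`. -/
def IsCutset {α : Type*} [PartialOrder α] (X : Set α) : Prop :=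
  ∀ σ : Set α, σ.Finite → IsChain (· ≤ ·) σ → ∃ a ∈ X, IsChain (· ≤ ·) (insert a σ)

/-- A subset `X` is coherent: every finite nonempty bounded subset of `X` has a meet or a join. -/
def IsCoherent {α : Type*} [PartialOrder α] (X : Set α) : Prop :=
  ∀ A ⊆ X, A.Finite → A.Nonempty → (BddAbove A ∨ BddBelow A) →
    (∃ z, IsGLB A z) ∨ (∃ z, IsLUB A z)

/-- The simplices of the crosscut complex `Γ_C(P,X)`: nonempty finite astral subsets of `X`. -/
def IsCCSimplex {α : Type*} [PartialOrder α] (X σ : Set α) : Prop :=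
  σ ⊆ X ∧ σ.Finite ∧ σ.Nonempty ∧ IsAstral σ

/-- `I_X(D) = {x ∈ X | D ⊆ st(x)}`. -/
def astralIdx {α : Type*} [PartialOrder α] (X D : Set α) : Set α :=
  {x ∈ X | D ⊆ starOf x}

/-- The set of maximal elements of a poset. -/
def mxlSet (α : Type*) [PartialOrder α] : Set α := {a | ∀ b, a ≤ b → b = a}

/-- The set of minimal elements of a poset. -/
def mnlSet (α : Type*) [PartialOrder α] : Set α := {a | ∀ b, b ≤ a → b = a}

/-- Type synonym carrying the Alexandroff topology (down-sets are open) of a preorder. -/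
def AlexSp (β : Type*) := β

instance {β : Type*} [Preorder β] : Preorder (AlexSp β) := inferInstanceAs (Preorder β)
instance {β : Type*} [PartialOrder β] : PartialOrder (AlexSp β) :=
  inferInstanceAs (PartialOrder β)

instance {β : Type*} [Preorder β] : TopologicalSpace (AlexSp β) where
  IsOpen U := IsLowerSet U
  isOpen_univ := isLowerSet_univ
  isOpen_inter _ _ h₁ h₂ := h₁.inter h₂
  isOpen_sUnion _ h := isLowerSet_sUnion h


section Aux

open ContinuousMap

lemma mem_starSetOf {α : Type*} [PartialOrder α] {A : Set α} {x : α} :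
    x ∈ starSetOf A ↔ ∀ a ∈ A, x ≤ a ∨ a ≤ x := by
  simp [starSetOf, starOf]

lemma comp_glb_lub {α : Type*} [PartialOrder α] {B : Set α} {z y : α}
    (hz : IsGLB B z ∨ IsLUB B z) (hy : ∀ b ∈ B, y ≤ b ∨ b ≤ y) : y ≤ z ∨ z ≤ y := by
  rcases hz with hz | hz
  · by_cases h : ∃ b ∈ B, b ≤ y
    · obtain ⟨b, hb, hby⟩ := h
      exact Or.inr ((hz.1 hb).trans hby)
    · push_neg at h
      exact Or.inl (hz.2 fun b hb => (hy b hb).resolve_right (h b hb))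
  · by_cases h : ∃ b ∈ B, y ≤ b
    · obtain ⟨b, hb, hyb⟩ := h
      exact Or.inl (hyb.trans (hz.1 hb))
    · push_neg at h
      exact Or.inr (hz.2 fun b hb => (hy b hb).resolve_left (h b hb))

lemma star_lemma {α : Type*} [PartialOrder α] {X A : Set α} (hcoh : IsCoherent X)
    (hAX : A ⊆ X) (hfin : A.Finite) (hne : A.Nonempty) {x : α} (hx : x ∈ starSetOf A) :
    ∃ z ∈ starSetOf A, ∀ y ∈ starSetOf A, y ≤ z ∨ z ≤ y := by
  rw [mem_starSetOf] at hx
  by_cases hB : ({a ∈ A | a ≤ x} : Set α).Nonempty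
  · have hBX : {a ∈ A | a ≤ x} ⊆ X := fun a ha => hAX ha.1
    have hBfin : ({a ∈ A | a ≤ x} : Set α).Finite := hfin.subset (fun a ha => ha.1)
    have hbdd : BddAbove ({a ∈ A | a ≤ x} : Set α) ∨ BddBelow ({a ∈ A | a ≤ x} : Set α) :=
      Or.inl ⟨x, fun a ha => ha.2⟩
    obtain ⟨z, hz⟩ : ∃ z, IsGLB ({a ∈ A | a ≤ x} : Set α) z ∨ IsLUB ({a ∈ A | a ≤ x} : Set α) z := by
      rcases hcoh _ hBX hBfin hB hbdd with ⟨z, h⟩ | ⟨z, h⟩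
      · exact ⟨z, Or.inl h⟩
      · exact ⟨z, Or.inr h⟩
    have hzx : z ≤ x := by
      rcases hz with h | h
      · obtain ⟨b, hb⟩ := hB
        exact (h.1 hb).trans hb.2
      · exact h.2 (fun a ha => ha.2)
    refine ⟨z, mem_starSetOf.2 fun a ha => ?_, fun y hy => comp_glb_lub hz (fun b hb => ?_)⟩
    · by_cases hax : a ≤ x
      · rcases hz with h | h
        · exact Or.inl (h.1 ⟨ha, hax⟩)
        · exact Or.inr (h.1 ⟨ha, hax⟩)
      · exact Or.inl (hzx.trans ((hx a ha).resolve_right hax))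
    · exact mem_starSetOf.1 hy b hb.1
  · have hxa : ∀ a ∈ A, x ≤ a := by
      intro a ha
      by_contra h
      exact hB ⟨a, ha, (hx a ha).resolve_left h⟩
    obtain ⟨z, hz⟩ : ∃ z, IsGLB A z ∨ IsLUB A z := by
      rcases hcoh A hAX hfin hne (Or.inr ⟨x, fun a ha => hxa a ha⟩) with ⟨z, h⟩ | ⟨z, h⟩
      · exact ⟨z, Or.inl h⟩
      · exact ⟨z, Or.inr h⟩
    refine ⟨z, mem_starSetOf.2 fun a ha => ?_,
      fun y hy => comp_glb_lub hz (fun b hb => mem_starSetOf.1 hy b hb)⟩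
    rcases hz with h | h
    · exact Or.inl (h.1 ha)
    · exact Or.inr (h.1 ha)

lemma isAstral_iff {α : Type*} [PartialOrder α] {A : Set α} :
    IsAstral A ↔ (starSetOf A).Nonempty := by
  constructor
  · rintro ⟨x, hx⟩
    exact ⟨x, mem_starSetOf.2 fun a ha => (hx ha).symm⟩
  · rintro ⟨x, hx⟩
    exact ⟨x, fun a ha => (mem_starSetOf.1 hx a ha).symm⟩

lemma comp_eq_star {α : Type*} [PartialOrder α] {A : Set α} {z : α}
    (hzA : z ∈ starSetOf A) (hz : ∀ y ∈ starSetOf A, y ≤ z ∨ z ≤ y)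
    {w : α} (hw : w ∈ starSetOf A) : compOf (starSetOf A) w = starSetOf A := by
  apply Set.eq_of_subset_of_subset
  · exact fun y hy => hy.1
  · intro y hy
    exact ⟨hy, Relation.ReflTransGen.head ⟨hw, hzA, hz w hw⟩
      (Relation.ReflTransGen.single ⟨hzA, hy, (hz y hy).symm⟩)⟩

lemma homotopic_of_le {β : Type*} [PartialOrder β] [TopologicalSpace β]
    (hO : ∀ U : Set β, IsOpen U ↔ IsLowerSet U)
    (f g : C(β, β)) (hfg : ∀ x, f x ≤ g x) : f.Homotopic g := by
  classical
  have h01 : (0 : unitInterval) ≠ 1 := by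
    intro h
    exact (by norm_num : (0:ℝ) ≠ 1) (congrArg Subtype.val h)
  refine ⟨⟨⟨fun p => if p.1 = 1 then g p.2 else f p.2, ?_⟩, ?_, ?_⟩⟩
  · rw [continuous_def]
    intro U hU
    have hUl : IsLowerSet U := (hO U).1 hU
    have hIio : IsOpen (Set.Iio (1 : unitInterval)) := by
      have : Set.Iio (1 : unitInterval) = Subtype.val ⁻¹' Set.Iio (1 : ℝ) := by
        ext t
        exact Iff.rfl
      rw [this]
      exact isOpen_Iio.preimage continuous_subtype_val
    have hset : (fun p : unitInterval × β => if p.1 = 1 then g p.2 else f p.2) ⁻¹' U =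
        (Set.Iio (1 : unitInterval) ×ˢ (f ⁻¹' U)) ∪ (Set.univ ×ˢ (g ⁻¹' U)) := by
      ext ⟨t, x⟩
      by_cases ht : t = 1
      · subst ht
        simp [lt_irrefl]
      · have htle : t ≤ 1 := t.2.2
        have htlt : t < 1 := lt_of_le_of_ne htle ht
        simp only [Set.mem_preimage, if_neg ht, Set.mem_union, Set.mem_prod, Set.mem_Iio,
          Set.mem_univ, true_and]
        exact ⟨fun h => Or.inl ⟨htlt, h⟩,
          fun h => h.elim (fun h => h.2) (fun h => hUl (hfg x) h)⟩
    rw [hset]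
    exact (hIio.prod (f.continuous.isOpen_preimage U hU)).union
      (isOpen_univ.prod (g.continuous.isOpen_preimage U hU))
  · intro x
    simp only [ContinuousMap.coe_mk]
    rw [if_neg h01]
  · intro x
    simp

lemma star_contractible {α : Type*} [PartialOrder α] (C : Set (AlexSp α)) (z : AlexSp α)
    (hzC : z ∈ C) (hz : ∀ x ∈ C, x ≤ z ∨ z ≤ x) :
    ContractibleSpace (Set.Elem C) := by
  classical
  have openIff : ∀ U : Set (Set.Elem C), IsOpen U ↔ IsLowerSet U := by
    intro U
    constructor
    · intro hU
      obtain ⟨V, hV, rfl⟩ := isOpen_induced_iff.1 hU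
      exact (show IsLowerSet V from hV).preimage (fun a b h => h)
    · intro hU
      refine isOpen_induced_iff.2 ⟨↑(lowerClosure (Subtype.val '' U)),
        (lowerClosure _).lower, ?_⟩
      ext x
      simp only [Set.mem_preimage, SetLike.mem_coe, mem_lowerClosure, Set.mem_image]
      constructor
      · rintro ⟨_, ⟨u, hu, rfl⟩, hle⟩
        exact hU hle hu
      · intro hx
        exact ⟨x, ⟨x, hx, rfl⟩, le_rfl⟩
  rw [contractible_iff_id_nullhomotopic]
  set zc : Set.Elem C := ⟨z, hzC⟩ with hzc
  have hmono : Monotone (fun x : Set.Elem C => if (x : AlexSp α) ≤ z then x else zc) := by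
    intro a b hab
    dsimp only
    split_ifs with h1 h2 h2
    · exact hab
    · exact h1
    · exact absurd (le_trans (show (a : AlexSp α) ≤ b from hab) h2) h1
    · exact le_refl zc
  have hcont : Continuous (fun x : Set.Elem C => if (x : AlexSp α) ≤ z then x else zc) :=
    continuous_def.2 fun U hU => (openIff _).2 (((openIff U).1 hU).preimage hmono)
  have hle_id : ∀ x, (⟨_, hcont⟩ : C(Set.Elem C, Set.Elem C)) x ≤ (ContinuousMap.id _) x := by
    intro x
    simp only [ContinuousMap.coe_mk, ContinuousMap.id_apply]
    split_ifs with h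
    · exact le_refl x
    · exact (hz x x.2).resolve_left h
  have hle_const : ∀ x, (⟨_, hcont⟩ : C(Set.Elem C, Set.Elem C)) x ≤
      (ContinuousMap.const _ zc) x := by
    intro x
    simp only [ContinuousMap.coe_mk, ContinuousMap.const_apply]
    split_ifs with h
    · exact h
    · exact le_refl zc
  have h1 := homotopic_of_le openIff ⟨_, hcont⟩ (ContinuousMap.id _) hle_id
  have h2 := homotopic_of_le openIff ⟨_, hcont⟩ (ContinuousMap.const _ zc) hle_const
  exact ⟨zc, h1.symm.trans h2⟩

end Aux

/-- For a coherent cutset `X`: `Γ_f(P,X) = {st(A) | A ⊆ X finite nonempty astral}`, and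
every `C ∈ Γ_f(P,X)` equals the star of one of its points within `C`; in particular each
such `C` is a contractible subspace of `P` (with the Alexandroff topology). -/
theorem stmt_10 {α : Type*} [PartialOrder α] {X : Set α}
    (hcut : IsCutset X) (hcoh : IsCoherent X) :
    crosscutPosetF X =
        {S | ∃ A : Set α, A ⊆ X ∧ A.Finite ∧ A.Nonempty ∧ IsAstral A ∧ S = starSetOf A} ∧
      ∀ C ∈ crosscutPosetF X,
        (∃ z ∈ C, C = {x ∈ C | x ≤ z ∨ z ≤ x}) ∧
          ContractibleSpace (Set.Elem (show Set (AlexSp α) from C)) := by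
  have main : ∀ C ∈ crosscutPosetF X, ∃ A : Set α, A ⊆ X ∧ A.Finite ∧ A.Nonempty ∧ IsAstral A ∧
      C = starSetOf A ∧ ∃ z ∈ starSetOf A, ∀ y ∈ starSetOf A, y ≤ z ∨ z ≤ y := by
    rintro C ⟨A, hne, hfin, hAX, w, hw, hC⟩
    obtain ⟨z, hzA, hz⟩ := star_lemma hcoh hAX hfin hne hw
    exact ⟨A, hAX, hfin, hne, isAstral_iff.2 ⟨w, hw⟩,
      by rw [hC]; exact comp_eq_star hzA hz hw, z, hzA, hz⟩
  constructor
  · ext S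
    constructor
    · intro hS
      obtain ⟨A, h1, h2, h3, h4, h5, _⟩ := main S hS
      exact ⟨A, h1, h2, h3, h4, h5⟩
    · rintro ⟨A, hAX, hfin, hne, hast, rfl⟩
      obtain ⟨w, hw⟩ := isAstral_iff.1 hast
      obtain ⟨z, hzA, hz⟩ := star_lemma hcoh hAX hfin hne hw
      exact ⟨A, hne, hfin, hAX, w, hw, (comp_eq_star hzA hz hw).symm⟩
  · intro C hC
    obtain ⟨A, hAX, hfin, hne, hast, rfl, z, hzA, hz⟩ := main C hC
    refine ⟨⟨z, hzA, ?_⟩, ?_⟩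
    · ext y
      exact ⟨fun hy => ⟨hy, hz y hy⟩, fun hy => hy.1⟩
    · exact star_contractible (starSetOf A) z hzA hz
end

section
/- Let P be a poset such that every element of P lies below some maximal element, every non-empty subset A of P whose opposite is well-ordered has an infimum in P, and every C ∈ Γ(P, mxl(P)) has a maximum element. Then P has the fixed point property (every order-preserving self-map has a fixed point) if and only if Γ(P, mxl(P)) has the fixed point property. -/
/-!
For `x : P` let `Φ x` be the component of `x` in `st(A_x)`, where `A_x` is the (nonempty) set of
maximal elements above `x`. If `C ∈ Γ(P, mxl P)` is a component of `st(B)` and `m ∈ C`, then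
`B ⊆ A_m`, so `Φ m ⊆ C`; when `m = max C` also `C ⊆ ↓m ⊆ Φ m`. Hence `Φ` and `max` form a Galois
insertion of `Γ(P, mxl P)` into `P`. A retract of a poset with the fixed point property has it;
conversely, a fixed point `C` of `Φ ∘ f ∘ max` gives `f (max C) ≤ max C`, and the Abian–Brown
theorem produces a fixed point of `f`.
-/

open Set OrderDual

def FixedPointProperty (α : Type*) [Preorder α] : Prop :=
  ∀ f : α → α, Monotone f → ∃ x, f x = x

section FixedPoint

variable {α β : Type*} [PartialOrder α]

theorem IsChain.exists_wellFoundedOn_gt_coinitial {c : Set α} (hc : IsChain (· ≤ ·) c) :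
    ∃ D ⊆ c, D.WellFoundedOn (fun a b => b < a) ∧ ∀ x ∈ c, ∃ d ∈ D, d ≤ x := by
  have hwf : WellFounded (WellOrderingRel (α := α)) := IsWellFounded.wf
  -- the records of `c` along a well-ordering: below every element of `c` preceding them
  refine ⟨{d ∈ c | ∀ d' ∈ c, WellOrderingRel d' d → d < d'}, fun d hd => hd.1, ?_, ?_⟩
  · refine WellFoundedOn.mono' (r := WellOrderingRel) (fun a ha b hb hba => ?_) hwf.wellFoundedOn
    rcases trichotomous_of WellOrderingRel a b with h | rfl | h
    · exact h
    · exact absurd hba (lt_irrefl a)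
    · exact absurd hba (ha.2 b hb.1 h).not_gt
  · intro x hx
    obtain ⟨d, ⟨hdc, hdx⟩, hmin⟩ := hwf.has_min {y ∈ c | y ≤ x} ⟨x, hx, le_rfl⟩
    refine ⟨d, ⟨hdc, fun d' hd' hd'd => ?_⟩, hdx⟩
    have hd'x : ¬ d' ≤ x := fun hle => hmin d' ⟨hd', hle⟩ hd'd
    rcases hc.total hdc hd' with h | h
    · exact h.lt_of_ne (by rintro rfl; exact hd'x hdx)
    · exact absurd (h.trans hdx) hd'x

theorem IsChain.exists_isGLB
    (hinf : ∀ A : Set α, A.Nonempty → IsChain (· ≤ ·) A →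
      A.WellFoundedOn (fun a b => b < a) → ∃ z, IsGLB A z)
    {c : Set α} (hc : IsChain (· ≤ ·) c) (hne : c.Nonempty) : ∃ z, IsGLB c z := by
  obtain ⟨D, hDc, hDwf, hcoin⟩ := hc.exists_wellFoundedOn_gt_coinitial
  obtain ⟨x, hx⟩ := hne
  obtain ⟨d, hd, -⟩ := hcoin x hx
  obtain ⟨z, hzlb, hzglb⟩ := hinf D ⟨d, hd⟩ (hc.mono hDc) hDwf
  refine ⟨z, fun y hy => ?_, fun w hw => hzglb fun d hd => hw (hDc hd)⟩
  obtain ⟨d, hd, hdy⟩ := hcoin y hy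
  exact (hzlb hd).trans hdy

/-- The Abian–Brown theorem. -/
theorem Monotone.exists_fixed_point_of_map_le
    (hinf : ∀ A : Set α, A.Nonempty → IsChain (· ≤ ·) A →
      A.WellFoundedOn (fun a b => b < a) → ∃ z, IsGLB A z)
    {f : α → α} (hf : Monotone f) {a : α} (ha : f a ≤ a) : ∃ x, f x = x := by
  -- a minimal element of `{x | f x ≤ x}` is a fixed point
  obtain ⟨z, -, hz⟩ := zorn_le_nonempty₀ (α := αᵒᵈ) {x | f (ofDual x) ≤ ofDual x}
    (fun c hcs hc y hy => by
      obtain ⟨w, hwlb, hwglb⟩ := IsChain.exists_isGLB hinf (c := ofDual ⁻¹' c) hc.symm ⟨y, hy⟩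
      exact ⟨toDual w, hwglb fun x hx => (hf (hwlb hx)).trans (hcs hx), fun x hx => hwlb hx⟩)
    (toDual a) ha
  exact ⟨ofDual z, hz.1.antisymm (hz.2 (hf hz.1) hz.1)⟩

theorem FixedPointProperty.of_leftInverse [PartialOrder β] {l : α → β} {u : β → α}
    (hl : Monotone l) (hu : Monotone u) (hlu : Function.LeftInverse l u)
    (h : FixedPointProperty α) : FixedPointProperty β := by
  intro f hf
  obtain ⟨x, hx⟩ := h (u ∘ f ∘ l) (hu.comp (hf.comp hl))
  refine ⟨l x, ?_⟩
  calc f (l x) = l (u (f (l x))) := (hlu _).symm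
    _ = l x := congrArg l hx

theorem GaloisInsertion.fixedPointProperty_iff [PartialOrder β] {l : α → β} {u : β → α}
    (gi : GaloisInsertion l u)
    (hinf : ∀ A : Set α, A.Nonempty → IsChain (· ≤ ·) A →
      A.WellFoundedOn (fun a b => b < a) → ∃ z, IsGLB A z) :
    FixedPointProperty α ↔ FixedPointProperty β := by
  refine ⟨.of_leftInverse gi.gc.monotone_l gi.gc.monotone_u gi.l_u_eq, fun h f hf => ?_⟩
  obtain ⟨b, hb⟩ := h (l ∘ f ∘ u) (gi.gc.monotone_l.comp (hf.comp gi.gc.monotone_u))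
  exact hf.exists_fixed_point_of_map_le hinf (gi.gc.le_u (le_of_eq hb))

end FixedPoint

section Crosscut

variable {α : Type*} [PartialOrder α]

lemma mem_starSetOf_iff {A : Set α} (hA : A ⊆ mxlSet α) {x : α} :
    x ∈ starSetOf A ↔ ∀ a ∈ A, x ≤ a := by
  simp only [starSetOf, mem_iInter, starOf, mem_ofPred_eq]
  exact forall₂_congr fun a ha => ⟨fun h => h.elim id fun hax => (hA ha x hax).le, Or.inl⟩

lemma starSetOf_anti {A B : Set α} (h : A ⊆ B) : starSetOf B ⊆ starSetOf A :=
  fun _ hx => mem_iInter₂.2 fun a ha => mem_iInter₂.1 hx a (h ha)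

lemma compOf_mono {S T : Set α} (hST : S ⊆ T) (x : α) : compOf S x ⊆ compOf T x :=
  fun _ ⟨hy, hxy⟩ =>
    ⟨hST hy, Relation.ReflTransGen.mono (fun _ _ ⟨ha, hb, h⟩ => ⟨hST ha, hST hb, h⟩) _ _ hxy⟩

lemma compOf_subset_of_mem {S : Set α} {x y : α} (hy : y ∈ compOf S x) :
    compOf S y ⊆ compOf S x :=
  fun _ ⟨hz, hyz⟩ => ⟨hz, hy.2.trans hyz⟩

def mxlAbove (x : α) : Set α := {a | a ∈ mxlSet α ∧ x ≤ a}

def crosscutComp (x : α) : Set α := compOf (starSetOf (mxlAbove x)) x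

lemma mem_crosscutComp_of_le {x y : α} (h : y ≤ x) : y ∈ crosscutComp x := by
  have hstar : ∀ {z}, z ≤ x → z ∈ starSetOf (mxlAbove x) := fun hz =>
    (mem_starSetOf_iff fun _ ha => ha.1).2 fun _ ha => hz.trans ha.2
  exact ⟨hstar h, .single ⟨hstar le_rfl, hstar h, Or.inr h⟩⟩

lemma crosscutComp_mem_crosscutPoset (hmx : ∀ x : α, ∃ a ∈ mxlSet α, x ≤ a) (x : α) :
    crosscutComp x ∈ crosscutPoset (mxlSet α) := by
  obtain ⟨a, ha, hxa⟩ := hmx x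
  exact ⟨mxlAbove x, ⟨a, ha, hxa⟩, fun _ ha => ha.1, x, (mem_crosscutComp_of_le le_rfl).1, rfl⟩

lemma crosscutComp_subset {C : Set α} (hC : C ∈ crosscutPoset (mxlSet α)) {x : α} (hx : x ∈ C) :
    crosscutComp x ⊆ C := by
  obtain ⟨B, -, hB, w, -, rfl⟩ := hC
  have hBx : B ⊆ mxlAbove x := fun b hb => ⟨hB hb, (mem_starSetOf_iff hB).1 hx.1 b hb⟩
  exact (compOf_mono (starSetOf_anti hBx) x).trans (compOf_subset_of_mem hx)

lemma crosscutComp_eq {C : Set α} (hC : C ∈ crosscutPoset (mxlSet α)) {m : α}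
    (hm : IsGreatest C m) : crosscutComp m = C :=
  (crosscutComp_subset hC hm.1).antisymm fun _ hy => mem_crosscutComp_of_le (hm.2 hy)

end Crosscut

/-- If every element lies below a maximal element, every nonempty inversely well-ordered
subset has an infimum, and every `C ∈ Γ(P, mxl P)` has a maximum, then `P` has the fixed
point property iff `Γ(P, mxl P)` has it. -/
theorem stmt_13 {α : Type*} [PartialOrder α]
    (hmx : ∀ x : α, ∃ a ∈ mxlSet α, x ≤ a)
    (hinf : ∀ A : Set α, A.Nonempty → IsChain (· ≤ ·) A →
      A.WellFoundedOn (fun a b => b < a) → ∃ z, IsGLB A z)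
    (hmax : ∀ C ∈ crosscutPoset (mxlSet α), ∃ m, IsGreatest C m) :
    (∀ f : α → α, Monotone f → ∃ x, f x = x) ↔
      (∀ g : {C // C ∈ crosscutPoset (mxlSet α)} → {C // C ∈ crosscutPoset (mxlSet α)},
        Monotone g → ∃ C, g C = C) := by
  choose top htop using hmax
  let l : α → {C // C ∈ crosscutPoset (mxlSet α)} :=
    fun x => ⟨crosscutComp x, crosscutComp_mem_crosscutPoset hmx x⟩
  let u : {C // C ∈ crosscutPoset (mxlSet α)} → α := fun C => top C.1 C.2
  have hl : Monotone l := fun x y hxy =>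
    crosscutComp_subset (l y).2 (mem_crosscutComp_of_le hxy)
  have hu : Monotone u := fun C D hCD => (htop D.1 D.2).2 (hCD (htop C.1 C.2).1)
  have hul : ∀ x, x ≤ u (l x) := fun x => (htop _ _).2 (mem_crosscutComp_of_le le_rfl)
  have hlu : ∀ C, l (u C) = C := fun C => Subtype.ext (crosscutComp_eq C.2 (htop C.1 C.2))
  exact (GaloisInsertion.monotoneIntro hu hl hul hlu).fixedPointProperty_iff hinf
end
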